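/- arXiv:2507.02213 — 5 statements merged into one kernel-verified Lean document; each statement's English description precedes it below -/
import Mathlib

section
/- Let S be a finite set, C a finite index set, p : C → [0,1] with ∑_{c∈C} p(c) = 1, and for each c ∈ C a nonempty cluster q(c) ⊆ S. For a fixed choice of conditional distributions θ_c supported on q(c), define γ(s') = ∑_{c∈C} θ_c(s') p(c). Then for any subset r ⊆ S, the quantity ∑_{s'∈r} γ(s') lies in the interval [∑_{c : q(c) ⊆ r} p(c), ∑_{c : q(c) ∩ r ≠ ∅} p(c)]. -/
open scoped Classical

theorem smdp_distribution_satisfies_interval_bounds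
    {S C : Type*} [Fintype S] [Fintype C]
    (p : C → ℝ) (hp0 : ∀ c, 0 ≤ p c) (hp1 : ∑ c, p c = 1)
    (q : C → Finset S) (hq : ∀ c, (q c).Nonempty)
    (θ : C → S → ℝ)
    (hθ0 : ∀ c s, 0 ≤ θ c s)
    (hθ1 : ∀ c, ∑ s, θ c s = 1)
    (hθsupp : ∀ c s, θ c s ≠ 0 → s ∈ q c)
    (γ : S → ℝ) (hγ : ∀ s', γ s' = ∑ c, θ c s' * p c)
    (r : Finset S) :
    (∑ c ∈ Finset.univ.filter (fun c => q c ⊆ r), p c) ≤ ∑ s' ∈ r, γ s' ∧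
      ∑ s' ∈ r, γ s' ≤ ∑ c ∈ Finset.univ.filter (fun c => (q c ∩ r).Nonempty), p c := by
  have key : ∑ s' ∈ r, γ s' = ∑ c, (∑ s' ∈ r, θ c s') * p c := by
    simp only [hγ, Finset.sum_mul]
    rw [Finset.sum_comm]
  have hf0 : ∀ c, 0 ≤ ∑ s' ∈ r, θ c s' := fun c =>
    Finset.sum_nonneg fun s _ => hθ0 c s
  have hf1 : ∀ c, ∑ s' ∈ r, θ c s' ≤ 1 := fun c => by
    rw [← hθ1 c]
    exact Finset.sum_le_sum_of_subset_of_nonneg (Finset.subset_univ r)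
      (fun s _ _ => hθ0 c s)
  rw [key]
  constructor
  · have heq : (∑ c ∈ Finset.univ.filter (fun c => q c ⊆ r), p c)
        = ∑ c ∈ Finset.univ.filter (fun c => q c ⊆ r), (∑ s' ∈ r, θ c s') * p c := by
      refine Finset.sum_congr rfl fun c hc => ?_
      have hsub : q c ⊆ r := (Finset.mem_filter.mp hc).2
      have : ∑ s' ∈ r, θ c s' = 1 := by
        rw [← hθ1 c]
        refine Finset.sum_subset (Finset.subset_univ r) ?_
        intro s _ hs
        by_contra h
        exact hs (hsub (hθsupp c s h))
      rw [this, one_mul]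
    rw [heq]
    refine Finset.sum_le_sum_of_subset_of_nonneg (Finset.filter_subset _ _) ?_
    exact fun c _ _ => mul_nonneg (hf0 c) (hp0 c)
  · have hzero : ∀ c ∈ Finset.univ, c ∉ Finset.univ.filter (fun c => (q c ∩ r).Nonempty) →
        (∑ s' ∈ r, θ c s') * p c = 0 := by
      intro c _ hc
      simp only [Finset.mem_filter, Finset.mem_univ, true_and] at hc
      have : ∑ s' ∈ r, θ c s' = 0 := by
        refine Finset.sum_eq_zero fun s hs => ?_
        by_contra h
        exact hc ⟨s, Finset.mem_inter.mpr ⟨hθsupp c s h, hs⟩⟩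
      rw [this, zero_mul]
    rw [← Finset.sum_subset (Finset.filter_subset _ Finset.univ) hzero]
    exact Finset.sum_le_sum fun c _ =>
      mul_le_of_le_one_left (hp0 c) (hf1 c)
end

section
/- Let S be a finite set, C a finite set with weights p : C → [0,1] summing to 1, clusters q(c) ⊆ S nonempty, and let S̃ be any finite collection of subsets of S. Define Γ_SMDP as the set of distributions γ on S of the form γ(s') = ∑_c θ_c(s') p(c) with θ_c supported on q(c), and Γ_MI as the set of distributions γ on S such that for every s̃ ∈ S̃, ∑_{c : q(c) ⊆ s̃} p(c) ≤ ∑_{s'∈s̃} γ(s') ≤ ∑_{c : q(c) ∩ s̃ ≠ ∅} p(c). Then Γ_SMDP ⊆ Γ_MI. -/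
open scoped Classical

theorem smdp_ambiguity_subset_mimdp_ambiguity
    {S C : Type*} [Fintype S] [Fintype C]
    (p : C → ℝ) (hp0 : ∀ c, 0 ≤ p c) (hp1 : ∑ c, p c = 1)
    (q : C → Finset S) (hq : ∀ c, (q c).Nonempty)
    (St : Finset (Finset S)) :
    { γ : S → ℝ | (∀ s, 0 ≤ γ s) ∧ (∑ s, γ s = 1) ∧
        ∃ θ : C → S → ℝ,
          (∀ c s, 0 ≤ θ c s) ∧ (∀ c, ∑ s, θ c s = 1) ∧
          (∀ c s, θ c s ≠ 0 → s ∈ q c) ∧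
          ∀ s, γ s = ∑ c, θ c s * p c } ⊆
    { γ : S → ℝ | (∀ s, 0 ≤ γ s) ∧ (∑ s, γ s = 1) ∧
        ∀ t ∈ St,
          (∑ c ∈ Finset.univ.filter (fun c => q c ⊆ t), p c) ≤ ∑ s ∈ t, γ s ∧
          ∑ s ∈ t, γ s ≤ ∑ c ∈ Finset.univ.filter (fun c => (q c ∩ t).Nonempty), p c } := by
  rintro γ ⟨hγ0, hγ1, θ, hθ0, hθ1, hsupp, hγ⟩
  refine ⟨hγ0, hγ1, fun t _ => ?_⟩
  have key : ∑ s ∈ t, γ s = ∑ c, (∑ s ∈ t, θ c s) * p c := by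
    simp only [hγ, Finset.sum_comm (s := t), Finset.sum_mul]
  have hle1 : ∀ c, ∑ s ∈ t, θ c s ≤ 1 := fun c => by
    rw [← hθ1 c]
    exact Finset.sum_le_sum_of_subset_of_nonneg (Finset.subset_univ t)
      (fun s _ _ => hθ0 c s)
  have hnn : ∀ c, 0 ≤ ∑ s ∈ t, θ c s := fun c =>
    Finset.sum_nonneg fun s _ => hθ0 c s
  constructor
  · rw [key]
    rw [← Finset.sum_filter_add_sum_filter_not Finset.univ (fun c => q c ⊆ t)]
    have h1 : ∑ c ∈ Finset.univ.filter (fun c => q c ⊆ t), p c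
        ≤ ∑ c ∈ Finset.univ.filter (fun c => q c ⊆ t), (∑ s ∈ t, θ c s) * p c := by
      apply Finset.sum_le_sum
      intro c hc
      simp only [Finset.mem_filter] at hc
      have : ∑ s ∈ t, θ c s = 1 := by
        rw [← hθ1 c]
        apply Finset.sum_subset (Finset.subset_univ t)
        intro s _ hs
        by_contra h
        exact hs (hc.2 (hsupp c s h))
      rw [this, one_mul]
    have h2 : 0 ≤ ∑ c ∈ Finset.univ.filter (fun c => ¬ q c ⊆ t), (∑ s ∈ t, θ c s) * p c :=
      Finset.sum_nonneg fun c _ => mul_nonneg (hnn c) (hp0 c)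
    linarith
  · rw [key]
    rw [← Finset.sum_filter_add_sum_filter_not Finset.univ
      (fun c => (q c ∩ t).Nonempty) (fun c => (∑ s ∈ t, θ c s) * p c)]
    have h1 : ∑ c ∈ Finset.univ.filter (fun c => (q c ∩ t).Nonempty), (∑ s ∈ t, θ c s) * p c
        ≤ ∑ c ∈ Finset.univ.filter (fun c => (q c ∩ t).Nonempty), p c := by
      apply Finset.sum_le_sum
      intro c _
      calc (∑ s ∈ t, θ c s) * p c ≤ 1 * p c :=
            mul_le_mul_of_nonneg_right (hle1 c) (hp0 c)
        _ = p c := one_mul _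
    have h2 : ∑ c ∈ Finset.univ.filter (fun c => ¬ (q c ∩ t).Nonempty), (∑ s ∈ t, θ c s) * p c = 0 := by
      apply Finset.sum_eq_zero
      intro c hc
      simp only [Finset.mem_filter, Finset.not_nonempty_iff_eq_empty] at hc
      have : ∑ s ∈ t, θ c s = 0 := by
        apply Finset.sum_eq_zero
        intro s hs
        by_contra h
        have : s ∈ q c ∩ t := Finset.mem_inter.mpr ⟨hsupp c s h, hs⟩
        simp [hc.2] at this
      rw [this, zero_mul]
    linarith
end

section
/- There exist a finite set S, weights p, clusters q(c), and a collection of subsets S̃ such that the inclusion Γ_SMDP ⊆ Γ_MI is strict. Concretely: take S = {s₁,...,s₇}, C = {c₁,...,c₅} with p(cᵢ) = 1/5, clusters q(c₁) = {s₁,s₂}, q(c₂) = {s₂,s₃,s₄}, q(c₃) = {s₃,s₄,s₅}, q(c₄) = {s₅,s₆}, q(c₅) = {s₆,s₇}, and S̃ containing all singletons and all five clusters. Then the distribution γ with γ(s₁) = γ(s₃) = γ(s₆) = 1/5, γ(s₄) = 2/5, and γ = 0 elsewhere satisfies all MI-MDP interval constraints but is not of SMDP form. -/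
/-!
Whatever the mixing distributions θ_c, a mixture γ = ∑_c θ_c p(c) puts on any set t of states at
least the weight of the clusters contained in t, since each such cluster sends all of its mass
into t. The interval constraints of Γ_MI impose this only for t ∈ S̃. Here
t = {s₅, s₆, s₇} ∉ S̃ contains q(c₄) and q(c₅), so a mixture needs γ(t) ≥ 2/5, while the given
γ has γ(t) = 1/5.
-/

open scoped Classical

open Finset

theorem sum_filter_subset_le_sum_of_mixture {C S : Type*} [Fintype C] [Fintype S]
    (p : C → ℝ) (hp : ∀ c, 0 ≤ p c) (q : C → Finset S) (θ : C → S → ℝ)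
    (hθ : ∀ c s, 0 ≤ θ c s) (hθ_sum : ∀ c, ∑ s, θ c s = 1)
    (hθ_supp : ∀ c s, θ c s ≠ 0 → s ∈ q c) (γ : S → ℝ) (hγ : ∀ s, γ s = ∑ c, θ c s * p c)
    (t : Finset S) :
    ∑ c ∈ univ.filter (fun c => q c ⊆ t), p c ≤ ∑ s ∈ t, γ s := by
  have mass_of_subset : ∀ c, q c ⊆ t → ∑ s ∈ t, θ c s = 1 := fun c hc => by
    rw [← hθ_sum c]
    exact sum_subset (subset_univ t) fun s _ hs => by_contra fun h => hs (hc (hθ_supp c s h))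
  calc ∑ c ∈ univ.filter (fun c => q c ⊆ t), p c
      = ∑ c ∈ univ.filter (fun c => q c ⊆ t), (∑ s ∈ t, θ c s) * p c :=
        sum_congr rfl fun c hc => by rw [mass_of_subset c (mem_filter.1 hc).2, one_mul]
    _ ≤ ∑ c, (∑ s ∈ t, θ c s) * p c :=
        sum_le_sum_of_subset_of_nonneg (filter_subset _ _) fun c _ _ =>
          mul_nonneg (sum_nonneg fun s _ => hθ c s) (hp c)
    _ = ∑ s ∈ t, γ s := by simp_rw [hγ, sum_mul]; exact sum_comm

-- States and clusters are indexed from 0: `sᵢ` is `i - 1 : Fin 7` and `cᵢ` is `i - 1 : Fin 5`.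
def exampleClusters : Fin 5 → Finset (Fin 7) := ![{0,1}, {1,2,3}, {2,3,4}, {4,5}, {5,6}]

noncomputable def exampleDist : Fin 7 → ℝ := ![1/5, 0, 1/5, 2/5, 0, 1/5, 0]

theorem exampleDist_mem_mi {p : Fin 5 → ℝ} (hp : ∀ c, p c = 1/5) :
    ∀ t ∈ (univ.image fun s : Fin 7 => ({s} : Finset (Fin 7))) ∪ univ.image exampleClusters,
      ∑ c ∈ univ.filter (fun c => exampleClusters c ⊆ t), p c ≤ ∑ s ∈ t, exampleDist s ∧
      ∑ s ∈ t, exampleDist s ≤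
        ∑ c ∈ univ.filter (fun c => (exampleClusters c ∩ t).Nonempty), p c := by
  intro t ht
  fin_cases ht <;> constructor <;>
    · simp only [sum_filter, Fin.sum_univ_five, hp]
      simp (config := { decide := true }) [exampleClusters, exampleDist, Matrix.cons_val] <;> norm_num

theorem smdp_strictly_tighter_than_mimdp_example :
    ∀ p : Fin 5 → ℝ, (∀ c, p c = 1/5) →
    ∀ q : Fin 5 → Finset (Fin 7),
      q = ![{0,1}, {1,2,3}, {2,3,4}, {4,5}, {5,6}] →
    ∀ γ : Fin 7 → ℝ, γ = ![1/5, 0, 1/5, 2/5, 0, 1/5, 0] →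
    ∀ St : Finset (Finset (Fin 7)),
      St = (Finset.univ.image fun s : Fin 7 => ({s} : Finset (Fin 7))) ∪
        Finset.univ.image q →
    ((∀ s, 0 ≤ γ s) ∧ (∑ s, γ s = 1) ∧
      ∀ t ∈ St,
        (∑ c ∈ Finset.univ.filter (fun c => q c ⊆ t), p c) ≤ ∑ s ∈ t, γ s ∧
        ∑ s ∈ t, γ s ≤ ∑ c ∈ Finset.univ.filter (fun c => (q c ∩ t).Nonempty), p c) ∧
    ¬ ∃ θ : Fin 5 → Fin 7 → ℝ,
        (∀ c s, 0 ≤ θ c s) ∧ (∀ c, ∑ s, θ c s = 1) ∧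
        (∀ c s, θ c s ≠ 0 → s ∈ q c) ∧
        ∀ s, γ s = ∑ c, θ c s * p c := by
  intro p hp q hq γ hγ St hSt
  subst hq hγ hSt
  refine ⟨⟨fun s => by fin_cases s <;> norm_num, by simp [Fin.sum_univ_seven]; norm_num,
    exampleDist_mem_mi hp⟩, ?_⟩
  rintro ⟨θ, hθ, hθ_sum, hθ_supp, hγ⟩
  have tail_mass := sum_filter_subset_le_sum_of_mixture p (fun c => by rw [hp]; norm_num) _ θ hθ
    hθ_sum hθ_supp _ hγ {4, 5, 6}
  simp only [sum_filter, Fin.sum_univ_five, hp] at tail_mass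
  simp (config := { decide := true }) [Matrix.cons_val] at tail_mass
  norm_num at tail_mass
end

section
/- Let S be a finite set, C a finite set with weights p summing to 1, and clusters q(c) ⊆ S nonempty. Define Γ_SMDP as the set of γ(s') = ∑_c θ_c(s') p(c) over families of distributions θ_c supported on q(c). Then Γ_SMDP is a nonempty convex compact subset of the probability simplex on S, and its extreme points are contained in the set of distributions of the form γ(s') = ∑_c p(c) · 1[σ(c) = s'] for selection functions σ with σ(c) ∈ q(c). -/
/-!
Write `γ = ∑ c, p c • θ c`: the SMDP set is the image, under this linear mixing map, of the
product over `c` of the simplices of distributions supported on `q c`. Each such simplex is the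
convex hull of the Dirac masses at points of `q c`; convex hulls commute with finite products
and with linear maps, so the SMDP set is the convex hull of the finitely many mixtures of Dirac
masses, i.e. of the distributions given by selections `σ`. A convex hull of a finite set is
compact, and its extreme points lie in the generating set.
-/

open scoped Classical

/-- The SMDP ambiguity set: total distributions induced by conditional
distributions `θ c` supported on the clusters `q c`, mixed with weights `p`. -/
def smdpSet {S C : Type*} [Fintype S] [Fintype C]
    (p : C → ℝ) (q : C → Finset S) : Set (S → ℝ) :=
  { γ | ∃ θ : C → S → ℝ,
      (∀ c s, 0 ≤ θ c s) ∧ (∀ c, ∑ s, θ c s = 1) ∧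
      (∀ c s, θ c s ≠ 0 → s ∈ q c) ∧
      ∀ s, γ s = ∑ c, θ c s * p c }

section SupportedSimplex

variable {R ι : Type*} [Field R] [LinearOrder R] [IsStrictOrderedRing R] [Fintype ι]
  [DecidableEq ι]

theorem convexHull_image_single_eq (t : Finset ι) :
    convexHull R ((fun i => Pi.single i (1 : R)) '' ↑t) =
      {v ∈ stdSimplex R ι | ∀ i, v i ≠ 0 → i ∈ t} := by
  apply Set.Subset.antisymm
  · refine convexHull_min ?_ ?_
    · rintro _ ⟨i, hi, rfl⟩
      refine ⟨single_mem_stdSimplex R i, fun j hj => ?_⟩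
      obtain rfl : j = i := by simpa [Pi.single_apply] using hj
      exact hi
    · refine (convex_stdSimplex R ι).inter fun x hx y hy a b _ _ _ i hi => ?_
      by_contra hit
      have hxi : x i = 0 := by_contra (hit ∘ hx i)
      have hyi : y i = 0 := by_contra (hit ∘ hy i)
      simp [hxi, hyi] at hi
  · rintro v ⟨⟨hv0, hv1⟩, hvt⟩
    have hzero : ∀ i ∉ t, v i = 0 := fun i hi => by_contra (hi ∘ hvt i)
    have hsum : ∑ i ∈ t, v i = 1 :=
      hv1 ▸ Finset.sum_subset (Finset.subset_univ t) fun i _ hi => hzero i hi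
    have hv : ∑ i ∈ t, v i • Pi.single i (1 : R) = v := by
      funext j
      by_cases hj : j ∈ t <;> simp [Finset.sum_apply, Pi.single_apply, hj, hzero]
    rw [← hv]
    exact (convex_convexHull R _).sum_mem (fun i _ => hv0 i) hsum
      fun i hi => subset_convexHull R _ ⟨i, hi, rfl⟩

end SupportedSimplex

section Mixture

variable {R C S : Type*} [CommSemiring R] [Fintype C]

def mixture (p : C → R) : (C → S → R) →ₗ[R] (S → R) :=
  ∑ c, p c • LinearMap.proj c

@[simp]
theorem mixture_apply (p : C → R) (θ : C → S → R) (s : S) :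
    mixture p θ s = ∑ c, p c * θ c s := by
  simp [mixture]

theorem mixture_mem_stdSimplex [PartialOrder R] [IsOrderedRing R] [Fintype S] {p : C → R}
    (hp : p ∈ stdSimplex R C) {θ : C → S → R} (hθ : ∀ c, θ c ∈ stdSimplex R S) :
    mixture p θ ∈ stdSimplex R S := by
  refine ⟨fun s => ?_, ?_⟩
  · simpa using Finset.sum_nonneg fun c _ => mul_nonneg (hp.1 c) ((hθ c).1 s)
  · simp [Finset.sum_comm (γ := S), ← Finset.mul_sum, (hθ _).2, hp.2]

theorem mixture_single_apply [DecidableEq S] (p : C → R) (σ : C → S) (s : S) :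
    mixture p (fun c => Pi.single (σ c) 1) s = ∑ c, if σ c = s then p c else 0 := by
  simp [Pi.single_apply, eq_comm]

end Mixture

section SMDP

variable {S C : Type*} [Fintype S] [Fintype C]

theorem smdpSet_eq_image_mixture (p : C → ℝ) (q : C → Finset S) :
    smdpSet p q =
      mixture p '' Set.univ.pi fun c => {v ∈ stdSimplex ℝ S | ∀ s, v s ≠ 0 → s ∈ q c} := by
  ext γ
  constructor
  · rintro ⟨θ, hθ0, hθ1, hθq, hγ⟩
    refine ⟨θ, fun c _ => ⟨⟨hθ0 c, hθ1 c⟩, hθq c⟩, funext fun s => ?_⟩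
    simp [hγ, mul_comm]
  · rintro ⟨θ, hθ, rfl⟩
    refine ⟨θ, fun c => (hθ c trivial).1.1, fun c => (hθ c trivial).1.2,
      fun c => (hθ c trivial).2, fun s => ?_⟩
    simp [mul_comm]

theorem smdpSet_eq_convexHull (p : C → ℝ) (q : C → Finset S) :
    smdpSet p q =
      convexHull ℝ (mixture p '' Set.univ.pi fun c => (fun s => Pi.single s 1) '' ↑(q c)) := by
  simp only [smdpSet_eq_image_mixture, ← LinearMap.image_convexHull, convexHull_pi,
    convexHull_image_single_eq]

theorem smdpSet_subset_stdSimplex {p : C → ℝ} (hp0 : ∀ c, 0 ≤ p c) (hp1 : ∑ c, p c = 1)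
    (q : C → Finset S) : smdpSet p q ⊆ stdSimplex ℝ S := by
  rw [smdpSet_eq_image_mixture]
  rintro _ ⟨θ, hθ, rfl⟩
  exact mixture_mem_stdSimplex ⟨hp0, hp1⟩ fun c => (hθ c trivial).1

end SMDP

theorem smdp_set_convex_compact_extreme_points
    {S C : Type*} [Fintype S] [Fintype C]
    (p : C → ℝ) (hp0 : ∀ c, 0 ≤ p c) (hp1 : ∑ c, p c = 1)
    (q : C → Finset S) (hq : ∀ c, (q c).Nonempty) :
    (smdpSet p q).Nonempty ∧
    Convex ℝ (smdpSet p q) ∧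
    IsCompact (smdpSet p q) ∧
    smdpSet p q ⊆ { γ : S → ℝ | (∀ s, 0 ≤ γ s) ∧ ∑ s, γ s = 1 } ∧
    Set.extremePoints ℝ (smdpSet p q) ⊆
      { γ : S → ℝ | ∃ σ : C → S, (∀ c, σ c ∈ q c) ∧
          ∀ s, γ s = ∑ c, if σ c = s then p c else 0 } := by
  set V : Set (C → S → ℝ) := Set.univ.pi fun c => (fun s => Pi.single s 1) '' (q c : Set S)
  have hV : V.Finite := Set.Finite.pi fun c => Set.Finite.image _ (q c).finite_toSet
  have hVne : V.Nonempty :=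
    Set.univ_pi_nonempty_iff.2 fun c => (Finset.coe_nonempty.2 (hq c)).image _
  have hsub := smdpSet_subset_stdSimplex hp0 hp1 q
  rw [smdpSet_eq_convexHull] at hsub ⊢
  refine ⟨(hVne.image _).convexHull, convex_convexHull ℝ _, (hV.image _).isCompact_convexHull ℝ,
    hsub, extremePoints_convexHull_subset.trans ?_⟩
  rintro _ ⟨θ, hθ, rfl⟩
  choose σ hσ hθσ using fun c => hθ c trivial
  obtain rfl : θ = fun c => Pi.single (σ c) 1 := funext fun c => (hθσ c).symm
  exact ⟨σ, hσ, mixture_single_apply p σ⟩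
end

section
/- Let S be a finite set, C₁ and C₂ finite index sets with weights p₁, p₂ summing to 1, and suppose C₂ refines C₁ in the sense that there is a map π : C₂ → C₁ with p₁(c) = ∑_{c'∈π⁻¹(c)} p₂(c') and clusters satisfying q₂(c') ⊆ q₁(π(c')) for all c' ∈ C₂. Then the SMDP ambiguity set for (C₂, p₂, q₂) is contained in the SMDP ambiguity set for (C₁, p₁, q₁), and consequently ∑_{c'} p₂(c') min_{s∈q₂(c')} v(s) ≥ ∑_c p₁(c) min_{s∈q₁(c)} v(s) for every v : S → ℝ. -/
open scoped Classical

theorem refinement_tightens_smdp_ambiguity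
    {S C₁ C₂ : Type*} [Fintype S] [Fintype C₁] [Fintype C₂]
    (p₁ : C₁ → ℝ) (p₂ : C₂ → ℝ)
    (hp₂0 : ∀ c', 0 ≤ p₂ c') (hp₂1 : ∑ c', p₂ c' = 1)
    (π : C₂ → C₁)
    (hp₁ : ∀ c, p₁ c = ∑ c' ∈ Finset.univ.filter (fun c' => π c' = c), p₂ c')
    (q₁ : C₁ → Finset S) (q₂ : C₂ → Finset S)
    (hq₁ : ∀ c, (q₁ c).Nonempty) (hq₂ : ∀ c', (q₂ c').Nonempty)
    (hqsub : ∀ c', q₂ c' ⊆ q₁ (π c')) :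
    smdpSet p₂ q₂ ⊆ smdpSet p₁ q₁ ∧
    ∀ v : S → ℝ,
      ∑ c, p₁ c * (q₁ c).inf' (hq₁ c) v ≤
        ∑ c', p₂ c' * (q₂ c').inf' (hq₂ c') v := by
  have hp₁0 : ∀ c, 0 ≤ p₁ c := by
    intro c; rw [hp₁ c]; exact Finset.sum_nonneg fun c' _ => hp₂0 c'
  constructor
  · rintro γ ⟨θ, hθ0, hθ1, hθq, hθγ⟩
    refine ⟨fun c s =>
      if h : p₁ c = 0 then (if s = (hq₁ c).choose then 1 else 0)
      else (∑ c' ∈ Finset.univ.filter (fun c' => π c' = c), θ c' s * p₂ c') / p₁ c,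
      ?_, ?_, ?_, ?_⟩
    · intro c s
      by_cases h : p₁ c = 0
      · simp only [h, dif_pos]; split <;> norm_num
      · simp only [h, dif_neg, not_false_iff]
        exact div_nonneg (Finset.sum_nonneg fun c' _ =>
          mul_nonneg (hθ0 c' s) (hp₂0 c')) (hp₁0 c)
    · intro c
      by_cases h : p₁ c = 0
      · simp only [h, dif_pos]
        rw [Finset.sum_ite_eq' Finset.univ ((hq₁ c).choose) (fun _ => (1:ℝ))]
        simp
      · simp only [h, dif_neg, not_false_iff]
        rw [← Finset.sum_div, div_eq_one_iff_eq h, Finset.sum_comm]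
        rw [hp₁ c]
        exact Finset.sum_congr rfl fun c' _ => by
          rw [← Finset.sum_mul, hθ1 c', one_mul]
    · intro c s hne
      by_cases h : p₁ c = 0
      · simp only [h, dif_pos] at hne
        have : s = (hq₁ c).choose := by by_contra hs; simp [hs] at hne
        rw [this]; exact (hq₁ c).choose_spec
      · simp only [h, dif_neg, not_false_iff] at hne
        have : ∑ c' ∈ Finset.univ.filter (fun c' => π c' = c), θ c' s * p₂ c' ≠ 0 := by
          intro h0; rw [h0, zero_div] at hne; exact hne rfl
        obtain ⟨c', hc', hne'⟩ := Finset.exists_ne_zero_of_sum_ne_zero this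
        have hsq : s ∈ q₂ c' := hθq c' s (fun h0 => hne' (by rw [h0, zero_mul]))
        have : π c' = c := (Finset.mem_filter.mp hc').2
        exact this ▸ hqsub c' hsq
    · intro s
      rw [hθγ s, ← Finset.sum_fiberwise Finset.univ π (fun c' => θ c' s * p₂ c')]
      refine Finset.sum_congr rfl fun c _ => ?_
      by_cases h : p₁ c = 0
      · simp only [h, dif_pos, mul_zero]
        refine Finset.sum_eq_zero fun c' hc' => ?_
        have : p₂ c' = 0 := by
          have := (Finset.sum_eq_zero_iff_of_nonneg
            (fun c' _ => hp₂0 c')).mp ((hp₁ c).symm.trans h) c' hc'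
          exact this
        rw [this, mul_zero]
      · simp only [h, dif_neg, not_false_iff]
        rw [div_mul_cancel₀ _ h]
  · intro v
    have key : ∀ c', p₂ c' * (q₁ (π c')).inf' (hq₁ (π c')) v ≤
        p₂ c' * (q₂ c').inf' (hq₂ c') v := by
      intro c'
      refine mul_le_mul_of_nonneg_left ?_ (hp₂0 c')
      exact Finset.le_inf' _ _ fun s hs => Finset.inf'_le _ (hqsub c' hs)
    calc ∑ c, p₁ c * (q₁ c).inf' (hq₁ c) v
        = ∑ c', p₂ c' * (q₁ (π c')).inf' (hq₁ (π c')) v := by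
          rw [← Finset.sum_fiberwise Finset.univ π
            (fun c' => p₂ c' * (q₁ (π c')).inf' (hq₁ (π c')) v)]
          refine Finset.sum_congr rfl fun c _ => ?_
          rw [hp₁ c, Finset.sum_mul]
          refine Finset.sum_congr rfl fun c' hc' => ?_
          have hπ : π c' = c := (Finset.mem_filter.mp hc').2
          rw [hπ]
      _ ≤ ∑ c', p₂ c' * (q₂ c').inf' (hq₂ c') v :=
          Finset.sum_le_sum fun c' _ => key c'
end
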